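/- arXiv:1905.09801 — 3 statements merged into one kernel-verified Lean document; each statement's English description precedes it below -/
import Mathlib

section
/- Let G be a graph on n vertices, let 0 < ψ < 1/3, and let S ⊆ V(G). If every vertex in S has degree at least (2/3 − ψ)·n in G, then there are at least (1/3 + √ψ/10)·n vertices of G each having at least (1/2 − √ψ)·|S| neighbours in S. -/
/-!
Let `q = √ψ` and let `T` be the set of vertices with at least `(1/2 - q)|S|` neighbours in `S`.
Counting the edges between `S` and `V` from both sides gives
`(2/3 - q²) n |S| ≤ ∑_{u ∈ S} deg u = ∑_v |N(v) ∩ S| ≤ |T| |S| + (n - |T|) (1/2 - q) |S|`,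
so `(1/2 + q) |T| ≥ (1/6 + q - q²) n`, and `(1/6 + q - q²) ≥ (1/3 + q/10)(1/2 + q)` for `0 ≤ q ≤ 37/66`.
When `q ≥ 1/2` (or `S = ∅`) the threshold is nonpositive and every vertex is in `T`.
-/

open Finset

theorem Finset.sum_le_card_filter_nsmul_add_card_filter_not_nsmul {ι M : Type*}
    [AddCommMonoid M] [LinearOrder M] [IsOrderedAddMonoid M]
    (s : Finset ι) (f : ι → M) (a b : M) (hb : ∀ i ∈ s, f i ≤ b) :
    ∑ i ∈ s, f i ≤ #{i ∈ s | a ≤ f i} • b + #{i ∈ s | ¬a ≤ f i} • a := by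
  rw [← sum_filter_add_sum_filter_not s (a ≤ f ·)]
  gcongr
  · exact sum_le_card_nsmul _ _ _ fun i hi => hb i (mem_filter.1 hi).1
  · exact sum_le_card_nsmul _ _ _ fun i hi => (not_le.1 (mem_filter.1 hi).2).le

namespace SimpleGraph

variable {V : Type*} [Fintype V] [DecidableEq V] (G : SimpleGraph V) [DecidableRel G.Adj]

theorem sum_card_neighborFinset_inter (S : Finset V) :
    ∑ v, #(G.neighborFinset v ∩ S) = ∑ u ∈ S, G.degree u := by
  have hbelow : ∀ u, bipartiteBelow G.Adj univ u = G.neighborFinset u := fun u => by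
    ext v; simp [bipartiteBelow, G.adj_comm]
  have habove : ∀ v, bipartiteAbove G.Adj S v = G.neighborFinset v ∩ S := fun v => by
    ext u; simp [bipartiteAbove, and_comm]
  simpa only [habove, hbelow, card_neighborFinset_eq_degree] using
    sum_card_bipartiteAbove_eq_sum_card_bipartiteBelow G.Adj (s := univ) (t := S)

theorem sum_degree_le_of_threshold (S : Finset V) (a : ℝ) :
    ∑ u ∈ S, (G.degree u : ℝ) ≤
      #{v | a ≤ #(G.neighborFinset v ∩ S)} * #S +
        (Fintype.card V - #{v | a ≤ #(G.neighborFinset v ∩ S)}) * a := by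
  have hcompl : (#{v | ¬a ≤ #(G.neighborFinset v ∩ S)} : ℝ) =
      Fintype.card V - #{v | a ≤ #(G.neighborFinset v ∩ S)} := by
    rw [eq_sub_iff_add_eq', ← Nat.cast_add, card_filter_add_card_filter_not, card_univ]
  rw [← hcompl, ← nsmul_eq_mul, ← nsmul_eq_mul]
  calc ∑ u ∈ S, (G.degree u : ℝ) = ∑ v, (#(G.neighborFinset v ∩ S) : ℝ) := by
        exact_mod_cast (G.sum_card_neighborFinset_inter S).symm
    _ ≤ _ := sum_le_card_filter_nsmul_add_card_filter_not_nsmul _ _ _ _ fun v _ =>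
        Nat.cast_le.2 (card_le_card inter_subset_right)

end SimpleGraph

theorem stmt_0_general {V : Type*} [Fintype V] [DecidableEq V] (G : SimpleGraph V) [DecidableRel G.Adj]
    (ψ : ℝ) (hψ : ψ < 1/3) (S : Finset V)
    (hdeg : ∀ v ∈ S, (2/3 - ψ) * (Fintype.card V : ℝ) ≤ (G.degree v : ℝ)) :
    (1/3 + Real.sqrt ψ / 10) * (Fintype.card V : ℝ) ≤
      (({v : V | (1/2 - Real.sqrt ψ) * (S.card : ℝ) ≤
          ((G.neighborFinset v ∩ S).card : ℝ)}.ncard : ℝ)) := by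
  set q := Real.sqrt ψ
  have hq0 : 0 ≤ q := Real.sqrt_nonneg ψ
  have hψq : ψ ≤ q ^ 2 := Real.sq_sqrt' ▸ le_max_left ψ 0
  have hq1 : q < 1 := (Real.sqrt_lt' one_pos).2 (by linarith)
  rw [← coe_filter_univ, Set.ncard_coe_finset]
  set T := ({v | (1/2 - q) * #S ≤ (#(G.neighborFinset v ∩ S) : ℝ)} : Finset V)
  have hn : (0 : ℝ) ≤ Fintype.card V := Nat.cast_nonneg _
  by_cases hthreshold : (1/2 - q) * #S ≤ 0
  · have hT : T = univ := eq_univ_of_forall fun v =>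
      mem_filter.2 ⟨mem_univ v, hthreshold.trans (Nat.cast_nonneg _)⟩
    rw [hT, card_univ]
    nlinarith
  have hS : (0 : ℝ) < #S := by
    by_contra! h
    exact hthreshold (by nlinarith [(Nat.cast_nonneg #S : (0 : ℝ) ≤ #S)])
  have hq : q < 1/2 := by nlinarith
  have hlower : (2/3 - ψ) * Fintype.card V * #S ≤ ∑ u ∈ S, (G.degree u : ℝ) := by
    simpa [sum_const, nsmul_eq_mul, mul_comm] using sum_le_sum hdeg
  have hupper : ∑ u ∈ S, (G.degree u : ℝ) ≤ #T * #S + (Fintype.card V - #T) * ((1/2 - q) * #S) :=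
    G.sum_degree_le_of_threshold S _
  have hcount : (2/3 - q ^ 2) * Fintype.card V ≤ #T + (Fintype.card V - #T) * (1/2 - q) := by
    refine le_of_mul_le_mul_right ?_ hS
    nlinarith [mul_le_mul_of_nonneg_right hψq (mul_nonneg hn hS.le)]
  nlinarith [mul_nonneg (mul_nonneg hn hq0) (by linarith : (0 : ℝ) ≤ 37/60 - 11/10 * q)]

theorem stmt_0 {V : Type*} [Fintype V] [DecidableEq V] (G : SimpleGraph V) [DecidableRel G.Adj]
    (ψ : ℝ) (hψ0 : 0 < ψ) (hψ : ψ < 1/3) (S : Finset V)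
    (hdeg : ∀ v ∈ S, (2/3 - ψ) * (Fintype.card V : ℝ) ≤ (G.degree v : ℝ)) :
    (1/3 + Real.sqrt ψ / 10) * (Fintype.card V : ℝ) ≤
      (({v : V | (1/2 - Real.sqrt ψ) * (S.card : ℝ) ≤
          ((G.neighborFinset v ∩ S).card : ℝ)}.ncard : ℝ)) :=
  stmt_0_general G ψ hψ S hdeg
end

section
/- Let G be a graph on m+1 vertices with minimum degree at least ⌊2m/3⌋ and a universal vertex v*. Let T be a tree with m edges that has a vertex t adjacent to a set L of at least ⌈m/3⌉ leaves. Then G contains T as a spanning subgraph; moreover there is an embedding mapping t to v*. -/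
/-!
A tree with `k` vertices embeds greedily into any graph of minimum degree at least `k - 1`, with
a prescribed root image: remove a leaf other than the root, embed the rest, and send the leaf to
a neighbour of its parent's image that is not yet used. Deleting the leaves `L` from `T` leaves a
tree on `m + 1 - |L| ≤ ⌊2m/3⌋ + 1` vertices, which embeds with `t ↦ v*`; the leaves of `L` hang
off `t`, so they can be sent to the remaining vertices, all adjacent to the universal vertex `v*`.
-/

open Function

namespace SimpleGraph

variable {V W : Type*} {G : SimpleGraph V} {T : SimpleGraph W}

lemma IsTree.induce_of_subsingleton_neighborSet (hT : T.IsTree) {s : Set W} (hne : s.Nonempty)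
    (hs : ∀ v ∉ s, (T.neighborSet v).Subsingleton) : (T.induce s).IsTree :=
  ⟨(connected_iff _).mpr ⟨hT.connected.preconnected.induce_of_degree_eq_one hs, hne.to_subtype⟩,
    hT.isAcyclic.induce s⟩

lemma exists_injective_hom_extend_induce {s : Set W} (f : T.induce s →g G) (hf : Injective f)
    (g : {y // y ∉ s} → V) (hg : Injective g) (hfg : ∀ a b, f a ≠ g b)
    (hadj : ∀ (a : s) (b : {y // y ∉ s}), T.Adj a b → G.Adj (f a) (g b))
    (hout : ∀ a b : {y // y ∉ s}, ¬T.Adj a b) :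
    ∃ F : T →g G, Injective F ∧ ∀ a : s, F a = f a := by
  classical
  let F : W → V := fun y => if h : y ∈ s then f ⟨y, h⟩ else g ⟨y, h⟩
  have hF : Injective F := fun a b h => by
    by_cases ha : a ∈ s <;> by_cases hb : b ∈ s <;>
      simp only [F, ha, hb, dite_true, dite_false] at h
    · exact congrArg Subtype.val (hf h)
    · exact (hfg _ _ h).elim
    · exact (hfg _ _ h.symm).elim
    · exact congrArg Subtype.val (hg h)
  refine ⟨⟨F, fun {a b} hab => ?_⟩, hF, fun a => dif_pos a.2⟩
  by_cases ha : a ∈ s <;> by_cases hb : b ∈ s <;> simp only [F, ha, hb, dite_true, dite_false]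
  · exact f.map_adj (v := ⟨a, ha⟩) (w := ⟨b, hb⟩) hab
  · exact hadj ⟨a, ha⟩ ⟨b, hb⟩ hab
  · exact (hadj ⟨b, hb⟩ ⟨a, ha⟩ hab.symm).symm
  · exact (hout ⟨a, ha⟩ ⟨b, hb⟩ hab).elim

lemma exists_adj_notMem_range [Fintype V] [DecidableRel G.Adj] {α : Type*} [Fintype α]
    (f : α → V) (a : α) (hdeg : Fintype.card α ≤ G.degree (f a)) :
    ∃ x, G.Adj (f a) x ∧ x ∉ Set.range f := by
  classical
  by_contra! h
  have hsub : G.neighborFinset (f a) ⊆ (Finset.univ.image f).erase (f a) := fun x hx => by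
    rw [mem_neighborFinset] at hx
    obtain ⟨b, rfl⟩ := h x hx
    exact Finset.mem_erase.mpr ⟨hx.ne.symm, Finset.mem_image_of_mem f (Finset.mem_univ b)⟩
  have := Finset.card_le_card hsub
  rw [card_neighborFinset_eq_degree, Finset.card_erase_of_mem (Finset.mem_image_of_mem f
    (Finset.mem_univ a))] at this
  have := Finset.card_image_le (s := Finset.univ) (f := f)
  have := Finset.card_pos.mpr ⟨a, Finset.mem_univ a⟩
  rw [Finset.card_univ] at *
  omega

lemma IsTree.exists_leaf_ne [Fintype W] [Nontrivial W] (hT : T.IsTree) (w : W) :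
    ∃ l, l ≠ w ∧ ∃ p, T.Adj l p ∧ ∀ y, T.Adj l y → y = p := by
  classical
  obtain ⟨u₁, u₂, hne, h₁, h₂⟩ := hT.exists_ne_and_degree_eq_one
  rw [degree_eq_one_iff_existsUnique_adj] at h₁ h₂
  by_cases hw : u₁ = w
  · exact ⟨u₂, hw ▸ hne.symm, h₂⟩
  · exact ⟨u₁, hw, h₁⟩

lemma exists_injective_hom_extend_leaf {l p : W} (hlp : T.Adj l p)
    (hp : ∀ y, T.Adj l y → y = p) (f : T.induce {l}ᶜ →g G) (hf : Injective f) {x : V}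
    (hx : G.Adj (f ⟨p, hlp.ne.symm⟩) x) (hxf : x ∉ Set.range f) :
    ∃ F : T →g G, Injective F ∧ ∀ a : ({l}ᶜ : Set W), F a = f a := by
  have hl : ∀ y : {y // y ∉ ({l}ᶜ : Set W)}, (y : W) = l := fun y => by simpa using y.2
  have : Subsingleton {y // y ∉ ({l}ᶜ : Set W)} :=
    ⟨fun a b => Subtype.ext <| (hl a).trans (hl b).symm⟩
  refine exists_injective_hom_extend_induce f hf (fun _ => x) (injective_of_subsingleton _)
    (fun a _ h => hxf ⟨a, h⟩) (fun a b hab => ?_) (fun a b hab => ?_)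
  · obtain rfl : (a : W) = p := hp a (by simpa only [hl b] using hab.symm)
    exact hx
  · obtain rfl := Subsingleton.elim a b
    exact T.irrefl hab

theorem IsTree.exists_injective_hom_of_card_le_minDegree_add_one [Fintype V] [DecidableRel G.Adj]
    [Fintype W] (hT : T.IsTree) (hG : Fintype.card W ≤ G.minDegree + 1) (w : W) (v : V) :
    ∃ f : T →g G, Injective f ∧ f w = v := by
  induction hn : Fintype.card W generalizing W with
  | zero => exact ((Fintype.card_eq_zero_iff.mp hn).false w).elim
  | succ n ih =>
    rcases subsingleton_or_nontrivial W with hW | hW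
    · exact ⟨⟨fun _ => v, fun {a b} hab => (T.irrefl (Subsingleton.elim a b ▸ hab)).elim⟩,
        injective_of_subsingleton _, rfl⟩
    classical
    obtain ⟨l, hlw, p, hlp, hp⟩ := hT.exists_leaf_ne w
    have hT' : (T.induce {l}ᶜ).IsTree :=
      hT.induce_of_subsingleton_neighborSet ⟨w, hlw.symm⟩ fun x hx y hy z hz => by
        rw [Set.mem_compl_singleton_iff, not_not] at hx
        subst hx
        exact (hp y hy).trans (hp z hz).symm
    have hcard : Fintype.card ({l}ᶜ : Set W) = n := by
      rw [Fintype.card_compl_set, hn]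
      simp
    obtain ⟨f, hf, hfw⟩ := ih hT' (by omega) ⟨w, hlw.symm⟩ hcard
    obtain ⟨x, hx, hxf⟩ := exists_adj_notMem_range (G := G) f ⟨p, hlp.ne.symm⟩
      (hcard ▸ (by omega : n ≤ G.minDegree).trans (G.minDegree_le_degree _))
    obtain ⟨F, hF, hFf⟩ := exists_injective_hom_extend_leaf hlp hp f hf hx hxf
    exact ⟨F, hF, (hFf ⟨w, hlw.symm⟩).trans hfw⟩

lemma exists_injective_hom_extend_of_pendant [Fintype V] [Fintype W]
    (hWV : Fintype.card W ≤ Fintype.card V) {s : Set W} (f : T.induce s →g G) (hf : Injective f)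
    {t : s} (huniv : ∀ x, x ≠ f t → G.Adj (f t) x) (hpend : ∀ a ∉ s, ∀ b, T.Adj a b → b = t) :
    ∃ F : T →g G, Injective F ∧ ∀ a : s, F a = f a := by
  classical
  obtain ⟨g⟩ : Nonempty ({y // y ∉ s} ↪ {x // x ∉ Set.range f}) := by
    apply Function.Embedding.nonempty_of_card_le
    rw [Fintype.card_subtype_compl, Fintype.card_subtype_compl, Set.card_range_of_injective hf]
    have := Fintype.card_subtype_le (· ∈ s)
    have : Fintype.card {x // x ∈ s} = Fintype.card s := Fintype.card_congr (Equiv.refl _)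
    omega
  refine exists_injective_hom_extend_induce f hf (fun b => g b)
    (Subtype.val_injective.comp g.injective) (fun a b h => (g b).2 ⟨a, h⟩) (fun a b hab => ?_)
    fun a b hab => b.2 (hpend a a.2 b hab ▸ t.2)
  obtain rfl : a = t := Subtype.ext (hpend b b.2 a hab.symm)
  exact huniv _ fun h => (g b).2 ⟨a, h.symm⟩

end SimpleGraph

theorem stmt_7 {V W : Type*} [Fintype V] (m : ℕ)
    (G : SimpleGraph V) [DecidableRel G.Adj]
    (hcard : Fintype.card V = m + 1)
    (hmin : 2 * m / 3 ≤ G.minDegree)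
    (vstar : V) (huniv : ∀ u : V, u ≠ vstar → G.Adj vstar u)
    [Fintype W] (T : SimpleGraph W) [DecidableRel T.Adj] [Fintype T.edgeSet]
    (hT : T.IsTree) (hm : T.edgeFinset.card = m)
    (t : W) (L : Finset W)
    (hL : ∀ l ∈ L, T.Adj t l ∧ T.degree l = 1)
    (hLcard : (m + 2) / 3 ≤ L.card) :
    ∃ f : T →g G, Function.Injective f ∧ f t = vstar := by
  classical
  have hWcard : Fintype.card W = m + 1 := by
    have := hT.card_edgeFinset
    omega
  have hpend : ∀ l ∈ L, ∀ y, T.Adj l y → y = t := fun l hl y hy =>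
    (SimpleGraph.degree_eq_one_iff_existsUnique_adj.mp (hL l hl).2).unique hy (hL l hl).1.symm
  let s : Set W := {y | y ∉ L}
  have ht : t ∈ s := fun htL => T.irrefl (hL t htL).1
  have hs : (T.induce s).IsTree :=
    hT.induce_of_subsingleton_neighborSet ⟨t, ht⟩ fun l hl y hy z hz =>
      (hpend l (not_not.mp hl) y hy).trans (hpend l (not_not.mp hl) z hz).symm
  have hscard : Fintype.card s ≤ G.minDegree + 1 := by
    have : Fintype.card s = m + 1 - L.card := by
      rw [← hWcard, ← Finset.card_compl, ← Set.toFinset_card]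
      congr 1
      ext
      simp [s]
    -- `(m + 2) / 3 = ⌈m/3⌉` and `⌊2m/3⌋ + ⌈m/3⌉ = m`
    omega
  obtain ⟨f, hf, hft⟩ := hs.exists_injective_hom_of_card_le_minDegree_add_one hscard ⟨t, ht⟩ vstar
  obtain ⟨F, hF, hFf⟩ := SimpleGraph.exists_injective_hom_extend_of_pendant
    (hWcard.trans hcard.symm).le f hf (hft ▸ huniv) fun a ha b hab => hpend a (not_not.mp ha) b hab
  exact ⟨F, hF, (hFf ⟨t, ht⟩).trans hft⟩
end

section
/- For every tree T on n ≥ 1 vertices, every vertex r of T, and every real k with 1 ≤ k ≤ n, there exists a vertex v of T such that every component of T − v not containing r has at most k vertices, while the components of T − v not containing r together with v contain more than k vertices or v = r. -/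
/-!
Choose `v` with the smallest branch (subtree when `T` is rooted at `r`) among `r` and the
vertices whose branch has more than `k` vertices. If `w` lies in a component `C` of `T - v`
away from `r`, let `u` be the neighbour of `v` in `C`. Since `uv` is a bridge, `C` is exactly
the branch at `u`, which is strictly smaller than the branch at `v`; by minimality `|C| ≤ k`.
-/

/-- The graph obtained from `T` by deleting the vertex `v` (keeping `v` as an
isolated vertex of the ambient vertex type). -/
def deleteVert {W : Type*} (T : SimpleGraph W) (v : W) : SimpleGraph W :=
  SimpleGraph.fromRel (fun a b => T.Adj a b ∧ a ≠ v ∧ b ≠ v)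

open SimpleGraph

/-- The vertices of the subtree at `v` of `T` rooted at `r`; for `v = r` it is every vertex. -/
def rootedSubtree {W : Type*} (T : SimpleGraph W) (r v : W) : Set W :=
  {x | ¬ (deleteVert T v).Reachable r x} ∪ {v}

section Deletion

variable {W : Type*} {T : SimpleGraph W} {e : Sym2 W} {u v w a b : W}

lemma deleteVert_adj : (deleteVert T v).Adj a b ↔ T.Adj a b ∧ a ≠ v ∧ b ≠ v := by
  simp only [deleteVert, fromRel_adj]
  constructor
  · rintro ⟨-, h | ⟨h, ha, hb⟩⟩
    · exact h
    · exact ⟨h.symm, hb, ha⟩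
  · rintro ⟨h, ha, hb⟩
    exact ⟨h.ne, .inl ⟨h, ha, hb⟩⟩

lemma deleteVert_le_deleteEdges (he : v ∈ e) : deleteVert T v ≤ T.deleteEdges {e} := by
  intro a b h
  obtain ⟨hab, ha, hb⟩ := deleteVert_adj.mp h
  refine deleteEdges_adj.mpr ⟨hab, fun hab_e => ?_⟩
  rw [Set.mem_singleton_iff] at hab_e
  rcases Sym2.mem_iff.mp (hab_e ▸ he) with rfl | rfl <;> contradiction

lemma SimpleGraph.Walk.reachable_deleteVert {G : SimpleGraph W} (hGT : G ≤ T) (p : G.Walk a b)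
    (hv : v ∉ p.support) : (deleteVert T v).Reachable a b := by
  induction p with
  | nil => rfl
  | cons h q ih =>
    obtain ⟨hva, hvq⟩ : v ≠ _ ∧ v ∉ q.support := by
      rwa [Walk.support_cons, List.mem_cons, not_or] at hv
    have hadj := deleteVert_adj.mpr ⟨hGT h, hva.symm, fun h => hvq (h ▸ q.start_mem_support)⟩
    exact hadj.reachable.trans (ih hvq)

lemma SimpleGraph.Reachable.exists_adj_reachable_deleteVert (h : T.Reachable w v) (hw : w ≠ v) :
    ∃ u, T.Adj u v ∧ (deleteVert T v).Reachable w u := by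
  obtain ⟨p⟩ := h
  induction p with
  | nil => contradiction
  | @cons w y v h q ih =>
    by_cases hy : y = v
    · exact ⟨w, hy ▸ h, .refl w⟩
    · obtain ⟨u, hu, hyu⟩ := ih hy
      exact ⟨u, hu, (deleteVert_adj.mpr ⟨h, hw, hy⟩).reachable.trans hyu⟩

lemma reachable_deleteVert_iff_reachable_deleteEdges (he : v ∈ e)
    (hav : ¬ (T.deleteEdges {e}).Reachable a v) :
    (deleteVert T v).Reachable a b ↔ (T.deleteEdges {e}).Reachable a b := by
  classical
  refine ⟨fun h => h.mono (deleteVert_le_deleteEdges he), fun ⟨p⟩ => ?_⟩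
  exact p.reachable_deleteVert (deleteEdges_le _) fun hv => hav ⟨p.takeUntil v hv⟩

lemma SimpleGraph.Reachable.reachable_deleteEdges_or (h : T.Reachable a u) :
    (T.deleteEdges {s(u, v)}).Reachable u a ∨ (T.deleteEdges {s(u, v)}).Reachable v a := by
  obtain ⟨p⟩ := h
  induction p with
  | nil => exact .inl .rfl
  | @cons a y u h q ih =>
    by_cases he : s(a, y) = s(u, v)
    · rcases Sym2.eq_iff.mp he with ⟨rfl, -⟩ | ⟨rfl, -⟩
      exacts [.inl .rfl, .inr .rfl]
    · have hay : (T.deleteEdges {s(u, v)}).Adj y a := (deleteEdges_adj.mpr ⟨h, he⟩).symm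
      exact ih.imp (·.trans hay.reachable) (·.trans hay.reachable)

end Deletion

section rootedSubtree

variable {W : Type*} {T : SimpleGraph W} {u v w r : W}

lemma rootedSubtree_eq_of_isBridge (hT : T.Connected) (hb : T.IsBridge s(u, v))
    (hr : (T.deleteEdges {s(u, v)}).Reachable v r) :
    rootedSubtree T r u = {x | (T.deleteEdges {s(u, v)}).Reachable u x} := by
  have hru : ¬ (T.deleteEdges {s(u, v)}).Reachable r u := fun h => hb (hr.trans h).symm
  ext x
  simp only [rootedSubtree, Set.mem_union, Set.mem_ofPred_eq, Set.mem_singleton_iff,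
    reachable_deleteVert_iff_reachable_deleteEdges (Sym2.mem_mk_left u v) hru]
  constructor
  · rintro (hx | rfl)
    · exact ((hT.preconnected x u).reachable_deleteEdges_or.resolve_right
        fun hvx => hx (hr.symm.trans hvx))
    · rfl
  · exact fun hux => .inl fun hrx => hb (hux.trans (hr.trans hrx).symm)

lemma setOf_reachable_deleteEdges_ssubset_rootedSubtree (hb : T.IsBridge s(u, v))
    (hr : (T.deleteEdges {s(u, v)}).Reachable v r) :
    {x | (T.deleteEdges {s(u, v)}).Reachable u x} ⊂ rootedSubtree T r v := by
  refine Set.ssubset_iff_exists.mpr ⟨fun x hux => .inl fun hrx => ?_, v, .inr rfl, hb⟩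
  have hrx' := hrx.mono (deleteVert_le_deleteEdges (T := T) (Sym2.mem_mk_right u v))
  exact hb (hux.trans (hr.trans hrx').symm)

theorem SimpleGraph.IsTree.exists_component_eq_rootedSubtree (hT : T.IsTree) (hwv : w ≠ v)
    (hrw : ¬ (deleteVert T v).Reachable r w) :
    ∃ u, {x | (deleteVert T v).Reachable w x} = rootedSubtree T r u ∧
      rootedSubtree T r u ⊂ rootedSubtree T r v := by
  obtain ⟨u, huv, hwu⟩ := (hT.connected.preconnected w v).exists_adj_reachable_deleteVert hwv
  have hb : T.IsBridge s(u, v) := isAcyclic_iff_forall_adj_isBridge.mp hT.isAcyclic huv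
  have hreach {x} : (deleteVert T v).Reachable u x ↔ (T.deleteEdges {s(u, v)}).Reachable u x :=
    reachable_deleteVert_iff_reachable_deleteEdges (Sym2.mem_mk_right u v) hb
  have hr : (T.deleteEdges {s(u, v)}).Reachable v r :=
    (hT.connected.preconnected r u).reachable_deleteEdges_or.resolve_left
      fun hur => hrw (hwu.trans (hreach.mpr hur)).symm
  refine ⟨u, ?_⟩
  rw [rootedSubtree_eq_of_isBridge hT.connected hb hr]
  refine ⟨Set.ext fun x => ?_, setOf_reachable_deleteEdges_ssubset_rootedSubtree hb hr⟩
  exact ⟨fun hwx => hreach.mp (hwu.symm.trans hwx), fun hux => hwu.trans (hreach.mpr hux)⟩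

end rootedSubtree

theorem stmt_10_general {W : Type*} [Fintype W] (T : SimpleGraph W) (hT : T.IsTree)
    (r : W) (k : ℝ) :
    ∃ v : W,
      (∀ w : W, w ≠ v → ¬ (deleteVert T v).Reachable r w →
        ({x : W | (deleteVert T v).Reachable w x}.ncard : ℝ) ≤ k) ∧
      (v = r ∨
        k < (({x : W | ¬ (deleteVert T v).Reachable r x} ∪ {v}).ncard : ℝ)) := by
  obtain ⟨v, hv, hmin⟩ := Set.exists_min_image {v | v = r ∨ k < (rootedSubtree T r v).ncard}
    (fun v => (rootedSubtree T r v).ncard) (Set.toFinite _) ⟨r, .inl rfl⟩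
  refine ⟨v, fun w hwv hrw => ?_, hv⟩
  obtain ⟨u, hcomp, hsub⟩ := hT.exists_component_eq_rootedSubtree hwv hrw
  by_contra! hk
  rw [hcomp] at hk
  exact (hmin u (.inr hk)).not_gt (Set.ncard_lt_ncard hsub)

theorem stmt_10 {W : Type*} [Fintype W] (T : SimpleGraph W) (hT : T.IsTree)
    (n : ℕ) (hn : Fintype.card W = n) (hn1 : 1 ≤ n) (r : W) (k : ℝ)
    (hk1 : 1 ≤ k) (hkn : k ≤ (n : ℝ)) :
    ∃ v : W,
      (∀ w : W, w ≠ v → ¬ (deleteVert T v).Reachable r w →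
        ({x : W | (deleteVert T v).Reachable w x}.ncard : ℝ) ≤ k) ∧
      (v = r ∨
        k < (({x : W | ¬ (deleteVert T v).Reachable r x} ∪ {v}).ncard : ℝ)) :=
  stmt_10_general T hT r k
end
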